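/- Let n, k be integers with k ≥ 1, and let γ be a real number with 0 < γ and k < n/2 − γ; set a₀ = (n−k−2)/2. Then for every real a ≥ a₀, the function λ ↦ T(γ,k,a,λ) is strictly increasing on the interval [0, ∞). -/

import Mathlib

/-- The Fourier symbol at a purely imaginary argument `b = βi`. -/
noncomputable def ThetaI (γ a β : ℝ) : ℝ :=
  (4 : ℝ) ^ γ * Real.Gamma ((1 + γ + a + β) / 2) * Real.Gamma ((1 + γ + a - β) / 2) /
    (Real.Gamma ((1 - γ + a + β) / 2) * Real.Gamma ((1 - γ + a - β) / 2))

/-- The Fourier symbol at a real argument `b`. -/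
noncomputable def ThetaR (γ a b : ℝ) : ℝ :=
  (4 : ℝ) ^ γ * ‖Complex.Gamma (((1 + γ + a) / 2 : ℝ) + (b / 2 : ℝ) * Complex.I)‖ ^ 2 /
    ‖Complex.Gamma (((1 - γ + a) / 2 : ℝ) + (b / 2 : ℝ) * Complex.I)‖ ^ 2

/-- The eigenvalue `Θ_{m,ℓ}` expressed as a function of the Laplace eigenvalue `λ`. -/
noncomputable def T (γ : ℝ) (k : ℤ) (a lam : ℝ) : ℝ :=
  if lam ≤ (k : ℝ) ^ 2 / 4 then ThetaI γ a (Real.sqrt ((k : ℝ) ^ 2 / 4 - lam))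
  else ThetaR γ a (Real.sqrt (lam - (k : ℝ) ^ 2 / 4))

/-!
Put `p = (1 + γ + a) / 2`, `q = (1 - γ + a) / 2`, `s = (λ - k² / 4) / 4`, and `w = β / 2` resp.
`w = i b / 2`, so that `w² = -s` in both regimes. The Euler products of `Γ(p + w)` and `Γ(p - w)`
combine into `∏ ((p + j)² - w²)`, hence
`T(γ, k, a, λ) = 4^γ · lim n^{2γ} ∏_{j ≤ n} ((q + j)² + s) / ((p + j)² + s)`.
For `0 ≤ q < p` every factor is strictly increasing in `s`; splitting off the factor `j = 0` keeps
the inequality strict in the limit, because the limit is positive.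
-/

open Filter Topology Finset
open scoped Nat ComplexConjugate

namespace Complex

theorem GammaSeq_add_mul_GammaSeq_sub (z w : ℂ) {n : ℕ} (hn : n ≠ 0) :
    GammaSeq (z + w) n * GammaSeq (z - w) n =
      (n : ℂ) ^ (2 * z) * (n ! : ℂ) ^ 2 / ∏ j ∈ range (n + 1), ((z + j) ^ 2 - w ^ 2) := by
  have hn' : (n : ℂ) ≠ 0 := Nat.cast_ne_zero.mpr hn
  have hpow : (n : ℂ) ^ (2 * z) = (n : ℂ) ^ (z + w) * (n : ℂ) ^ (z - w) := by
    rw [← cpow_add _ _ hn']; ring_nf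
  have hprod : ∏ j ∈ range (n + 1), ((z + j) ^ 2 - w ^ 2) =
      (∏ j ∈ range (n + 1), (z + w + j)) * ∏ j ∈ range (n + 1), (z - w + j) := by
    rw [← prod_mul_distrib]; exact prod_congr rfl fun j _ => by ring
  rw [GammaSeq, GammaSeq, hpow, hprod]
  ring

theorem tendsto_cpow_mul_prod_div_eq_Gamma_ratio (z₁ z₂ w : ℂ)
    (h : Gamma (z₂ + w) * Gamma (z₂ - w) ≠ 0) :
    Tendsto (fun n : ℕ => (n : ℂ) ^ (2 * (z₁ - z₂)) *
        ∏ j ∈ range (n + 1), (((z₂ + j) ^ 2 - w ^ 2) / ((z₁ + j) ^ 2 - w ^ 2))) atTop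
      (𝓝 (Gamma (z₁ + w) * Gamma (z₁ - w) / (Gamma (z₂ + w) * Gamma (z₂ - w)))) := by
  refine Tendsto.congr' ?_ (((GammaSeq_tendsto_Gamma _).mul (GammaSeq_tendsto_Gamma _)).div
    ((GammaSeq_tendsto_Gamma _).mul (GammaSeq_tendsto_Gamma _)) h)
  filter_upwards [eventually_ne_atTop 0] with n hn
  have hn' : (n : ℂ) ≠ 0 := Nat.cast_ne_zero.mpr hn
  have hfact : (n ! : ℂ) ≠ 0 := Nat.cast_ne_zero.mpr n.factorial_ne_zero
  simp only [Pi.div_apply]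
  rw [GammaSeq_add_mul_GammaSeq_sub _ _ hn, GammaSeq_add_mul_GammaSeq_sub _ _ hn,
    prod_div_distrib, mul_sub, cpow_sub _ _ hn']
  field_simp

theorem Gamma_mul_Gamma_conj (z : ℂ) : Gamma z * Gamma (conj z) = (‖Gamma z‖ ^ 2 : ℝ) := by
  rw [Gamma_conj, mul_conj, normSq_eq_norm_sq]

end Complex

theorem Real.sqrt_sq_div_four_sub_le (x : ℝ) {y : ℝ} (hy : 0 ≤ y) :
    √(x ^ 2 / 4 - y) ≤ |x| / 2 :=
  calc √(x ^ 2 / 4 - y) ≤ √((|x| / 2) ^ 2) :=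
        Real.sqrt_le_sqrt (by rw [div_pow, sq_abs]; linarith)
    _ = |x| / 2 := Real.sqrt_sq (by positivity)

noncomputable def gammaFactor (p q s : ℝ) (j : ℕ) : ℝ := ((q + j) ^ 2 + s) / ((p + j) ^ 2 + s)

theorem tendsto_rpow_mul_prod_gammaFactor (p q s : ℝ) (w : ℂ) (hw : w ^ 2 = -s) {L : ℝ}
    (hL : Complex.Gamma (p + w) * Complex.Gamma (p - w) /
      (Complex.Gamma (q + w) * Complex.Gamma (q - w)) = L)
    (h : Complex.Gamma (q + w) * Complex.Gamma (q - w) ≠ 0) :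
    Tendsto (fun n : ℕ => (n : ℝ) ^ (2 * (p - q)) * ∏ j ∈ range (n + 1), gammaFactor p q s j)
      atTop (𝓝 L) := by
  have hlim := Complex.tendsto_cpow_mul_prod_div_eq_Gamma_ratio p q w h
  rw [hL] at hlim
  refine tendsto_ofReal_iff.mp (hlim.congr fun n => ?_)
  simp only [gammaFactor, Complex.ofReal_mul, Complex.ofReal_prod, Complex.ofReal_div,
    Complex.ofReal_add, Complex.ofReal_pow, Complex.ofReal_natCast,
    Complex.ofReal_cpow n.cast_nonneg, hw, sub_neg_eq_add]
  push_cast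
  rfl

theorem gammaFactor_pos {p q s : ℝ} (hq : 0 ≤ q) (hqp : q ≤ p) (hs : -q ^ 2 < s) (j : ℕ) :
    0 < gammaFactor p q s j := by
  have hj : (0 : ℝ) ≤ j := j.cast_nonneg
  unfold gammaFactor
  apply div_pos <;> nlinarith

theorem gammaFactor_lt_gammaFactor {p q s₁ s₂ : ℝ} (hq : 0 ≤ q) (hqp : q < p) (hs₁ : -q ^ 2 < s₁)
    (hs : s₁ < s₂) (j : ℕ) : gammaFactor p q s₁ j < gammaFactor p q s₂ j := by
  have hj : (0 : ℝ) ≤ j := j.cast_nonneg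
  have hsq : (q + j) ^ 2 < (p + j) ^ 2 := by nlinarith
  unfold gammaFactor
  rw [div_lt_div_iff₀ (by nlinarith) (by nlinarith)]
  nlinarith [mul_pos (sub_pos.mpr hs) (sub_pos.mpr hsq)]

theorem prod_gammaFactor_mul_le {p q s₁ s₂ : ℝ} (hq : 0 ≤ q) (hqp : q < p) (hs₁ : -q ^ 2 < s₁)
    (hs : s₁ < s₂) (n : ℕ) :
    (∏ j ∈ range (n + 1), gammaFactor p q s₁ j) * gammaFactor p q s₂ 0 ≤
      (∏ j ∈ range (n + 1), gammaFactor p q s₂ j) * gammaFactor p q s₁ 0 := by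
  have hs₂ : -q ^ 2 < s₂ := hs₁.trans hs
  have hR := prod_le_prod (s := range n) (fun j _ => (gammaFactor_pos hq hqp.le hs₁ (j + 1)).le)
    fun j _ => (gammaFactor_lt_gammaFactor hq hqp hs₁ hs (j + 1)).le
  have h₀ := mul_pos (gammaFactor_pos hq hqp.le hs₁ 0) (gammaFactor_pos hq hqp.le hs₂ 0)
  rw [prod_range_succ', prod_range_succ']
  nlinarith [mul_le_mul_of_nonneg_right hR h₀.le]

theorem lt_of_tendsto_rpow_mul_prod_gammaFactor {p q s₁ s₂ t L₁ L₂ : ℝ} (hq : 0 ≤ q) (hqp : q < p)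
    (hs₁ : -q ^ 2 < s₁) (hs : s₁ < s₂) (hL₂ : 0 < L₂)
    (h₁ : Tendsto (fun n : ℕ => (n : ℝ) ^ t * ∏ j ∈ range (n + 1), gammaFactor p q s₁ j) atTop
      (𝓝 L₁))
    (h₂ : Tendsto (fun n : ℕ => (n : ℝ) ^ t * ∏ j ∈ range (n + 1), gammaFactor p q s₂ j) atTop
      (𝓝 L₂)) :
    L₁ < L₂ := by
  have hle : L₁ * gammaFactor p q s₂ 0 ≤ L₂ * gammaFactor p q s₁ 0 :=
    le_of_tendsto_of_tendsto' (h₁.mul_const _) (h₂.mul_const _) fun n => by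
      rw [mul_assoc, mul_assoc]
      exact mul_le_mul_of_nonneg_left (prod_gammaFactor_mul_le hq hqp hs₁ hs n) (by positivity)
  have h0 := gammaFactor_lt_gammaFactor hq hqp hs₁ hs 0
  have hpos := gammaFactor_pos hq hqp.le hs₁ 0
  nlinarith

theorem ThetaI_eq (γ a β : ℝ) :
    ThetaI γ a β = 4 ^ γ * (Real.Gamma ((1 + γ + a) / 2 + β / 2) *
      Real.Gamma ((1 + γ + a) / 2 - β / 2) /
      (Real.Gamma ((1 - γ + a) / 2 + β / 2) * Real.Gamma ((1 - γ + a) / 2 - β / 2))) := by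
  unfold ThetaI
  ring_nf

theorem ThetaI_pos {γ a β : ℝ} (h : |γ| + |β| < 1 + a) : 0 < ThetaI γ a β := by
  have := neg_abs_le γ; have := le_abs_self γ; have := neg_abs_le β; have := le_abs_self β
  rw [ThetaI_eq]
  exact mul_pos (by positivity) <| div_pos
    (mul_pos (Real.Gamma_pos_of_pos (by linarith)) (Real.Gamma_pos_of_pos (by linarith)))
    (mul_pos (Real.Gamma_pos_of_pos (by linarith)) (Real.Gamma_pos_of_pos (by linarith)))

theorem ThetaR_pos {γ a : ℝ} (b : ℝ) (h : |γ| < 1 + a) : 0 < ThetaR γ a b := by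
  have := neg_abs_le γ; have := le_abs_self γ
  have hΓ : ∀ x : ℝ, 0 < x → 0 < ‖Complex.Gamma (x + (b / 2 : ℝ) * Complex.I)‖ := fun x hx =>
    norm_pos_iff.mpr (Complex.Gamma_ne_zero_of_re_pos (by simpa using hx))
  unfold ThetaR
  have := hΓ ((1 + γ + a) / 2) (by linarith)
  have := hΓ ((1 - γ + a) / 2) (by linarith)
  positivity

theorem T_pos {γ a lam : ℝ} {k : ℤ} (hγ : 0 ≤ γ) (hlam : 0 ≤ lam)
    (hd : |(k : ℝ)| / 2 < 1 - γ + a) : 0 < T γ k a lam := by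
  unfold T
  split_ifs
  · refine ThetaI_pos ?_
    rw [abs_of_nonneg hγ, abs_of_nonneg (Real.sqrt_nonneg _)]
    linarith [Real.sqrt_sq_div_four_sub_le (k : ℝ) hlam]
  · exact ThetaR_pos _ (by rw [abs_of_nonneg hγ]; linarith [abs_nonneg (k : ℝ)])

theorem tendsto_rpow_mul_prod_gammaFactor_T {γ a lam : ℝ} {k : ℤ} (hlam : 0 ≤ lam)
    (hd : |(k : ℝ)| / 2 < 1 - γ + a) :
    Tendsto (fun n : ℕ => (n : ℝ) ^ (2 * γ) *
        ∏ j ∈ range (n + 1),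
          gammaFactor ((1 + γ + a) / 2) ((1 - γ + a) / 2) ((lam - k ^ 2 / 4) / 4) j)
      atTop (𝓝 (T γ k a lam / 4 ^ γ)) := by
  have hexp : 2 * γ = 2 * ((1 + γ + a) / 2 - (1 - γ + a) / 2) := by ring
  have h4 : (4 : ℝ) ^ γ ≠ 0 := by positivity
  rw [hexp, T]
  split_ifs with h
  · set β := Real.sqrt ((k : ℝ) ^ 2 / 4 - lam)
    have hβsq : β ^ 2 = k ^ 2 / 4 - lam := Real.sq_sqrt (by linarith)
    have hβ : β ≤ |(k : ℝ)| / 2 := Real.sqrt_sq_div_four_sub_le (k : ℝ) hlam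
    have hΓ : ∀ x : ℝ, 0 < x → Complex.Gamma x ≠ 0 := fun x hx =>
      Complex.Gamma_ne_zero_of_re_pos (by simpa using hx)
    refine tendsto_rpow_mul_prod_gammaFactor _ _ _ ((β / 2 : ℝ) : ℂ) ?_ ?_ ?_
    · rw [← Complex.ofReal_pow, div_pow, hβsq]; push_cast; ring
    · simp only [← Complex.ofReal_add, ← Complex.ofReal_sub, Complex.Gamma_ofReal,
        ← Complex.ofReal_mul, ← Complex.ofReal_div, ThetaI_eq, mul_div_cancel_left₀ _ h4]
    · simp only [← Complex.ofReal_add, ← Complex.ofReal_sub]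
      exact mul_ne_zero (hΓ _ (by linarith [Real.sqrt_nonneg ((k : ℝ) ^ 2 / 4 - lam)]))
        (hΓ _ (by linarith))
  · set b := Real.sqrt (lam - (k : ℝ) ^ 2 / 4)
    have hbsq : b ^ 2 = lam - k ^ 2 / 4 := Real.sq_sqrt (by linarith)
    have hconj : ∀ x : ℝ, (x : ℂ) - (b / 2 : ℝ) * Complex.I =
        conj (x + (b / 2 : ℝ) * Complex.I) := fun x => by
      rw [map_add, map_mul, Complex.conj_ofReal, Complex.conj_ofReal, Complex.conj_I]; ring
    refine tendsto_rpow_mul_prod_gammaFactor _ _ _ (((b / 2 : ℝ) : ℂ) * Complex.I) ?_ ?_ ?_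
    · rw [mul_pow, Complex.I_sq, ← Complex.ofReal_pow, div_pow, hbsq]; push_cast; ring
    · rw [hconj, hconj, Complex.Gamma_mul_Gamma_conj, Complex.Gamma_mul_Gamma_conj,
        ← Complex.ofReal_div, ThetaR, mul_div_assoc, mul_div_cancel_left₀ _ h4]
    · rw [hconj, Complex.Gamma_mul_Gamma_conj]
      have hre : 0 < (((1 - γ + a) / 2 : ℝ) + (b / 2 : ℝ) * Complex.I : ℂ).re := by
        simp only [Complex.add_re, Complex.ofReal_re, Complex.re_ofReal_mul, Complex.I_re, mul_zero,
          add_zero]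
        linarith [abs_nonneg (k : ℝ)]
      exact_mod_cast (pow_pos (norm_pos_iff.mpr (Complex.Gamma_ne_zero_of_re_pos hre)) 2).ne'

theorem stmt8 (n k : ℤ) (hk : 1 ≤ k) (γ : ℝ) (hγ : 0 < γ)
    (hkn : (k : ℝ) < (n : ℝ) / 2 - γ) :
    ∀ a : ℝ, ((n : ℝ) - (k : ℝ) - 2) / 2 ≤ a →
      StrictMonoOn (fun lam : ℝ => T γ k a lam) (Set.Ici 0) := by
  intro a ha lam₁ (h₁ : 0 ≤ lam₁) lam₂ (h₂ : 0 ≤ lam₂) hlt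
  have hk₀ : (0 : ℝ) ≤ k := by exact_mod_cast (zero_le_one.trans hk)
  have hd : |(k : ℝ)| / 2 < 1 - γ + a := by rw [abs_of_nonneg hk₀]; linarith
  have hlim := lt_of_tendsto_rpow_mul_prod_gammaFactor (by linarith [abs_nonneg (k : ℝ)])
    (by linarith) (by nlinarith [abs_nonneg (k : ℝ), sq_abs (k : ℝ)]) (by linarith)
    (div_pos (T_pos hγ.le h₂ hd) (by positivity))
    (tendsto_rpow_mul_prod_gammaFactor_T h₁ hd) (tendsto_rpow_mul_prod_gammaFactor_T h₂ hd)
  exact (div_lt_div_iff_of_pos_right (by positivity)).mp hlim
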